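/- arXiv:2201.03126 — 2 statements merged into one kernel-verified Lean document; each statement's English description precedes it below -/
import Mathlib

section
/- The variance of the spillage distribution equals n·H_1 - n²·H_1² + n(n-1)·H_2, where H_ℓ = φ^ℓ · S(n-ℓ, k, φ)/S(n, k, φ), for k ≤ n and φ > 0. -/
open Finset Filter Real

/-- Central Stirling numbers of the second kind. -/
def stirling2 : ℕ → ℕ → ℕ
  | 0, 0 => 1
  | 0, _ + 1 => 0
  | _ + 1, 0 => 0
  | n + 1, k + 1 => (k + 1) * stirling2 n (k + 1) + stirling2 n k

/-- Noncentral Stirling numbers of the second kind. -/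
noncomputable def ncS (n k : ℕ) (φ : ℝ) : ℝ :=
  ∑ j ∈ Finset.range (n + 1), (n.choose j : ℝ) * φ ^ (n - j) * (stirling2 j k : ℝ)

/-- Spillage mass function. -/
noncomputable def spillage (r n k : ℕ) (φ : ℝ) : ℝ :=
  (n.choose (k + r) : ℝ) * φ ^ (n - k - r) * (stirling2 (k + r) k : ℝ) / ncS n k φ

/-!
Up to the normalisation by `S(n, k, φ)`, the spillage is the law of `r = j - k`, where `j` carries
the weights `T j = C(n, j) φ^(n-j) S(j, k)`. Since `r = (n - k) - (n - j)`, its variance is that of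
`X = n - j`, i.e. `E[X(X-1)] + E[X] - E[X]²`. The identity `(n - j) C(n, j) = n C(n-1, j)` turns the
factorial moments of `X` into `E[X] = n φ S(n-1, k, φ) / S(n, k, φ)` and
`E[X(X-1)] = n (n-1) φ² S(n-2, k, φ) / S(n, k, φ)`.
-/

lemma stirling2_eq_zero_of_lt : ∀ {j k : ℕ}, j < k → stirling2 j k = 0
  | 0, _ + 1, _ => rfl
  | j + 1, k + 1, h => by
    simp only [stirling2, stirling2_eq_zero_of_lt (by omega : j < k + 1),
      stirling2_eq_zero_of_lt (by omega : j < k), mul_zero]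

lemma stirling2_self : ∀ k : ℕ, stirling2 k k = 1
  | 0 => rfl
  | k + 1 => by simp [stirling2, stirling2_eq_zero_of_lt (Nat.lt_succ_self k), stirling2_self k]

lemma ncS_pos {n k : ℕ} (hk : k ≤ n) {φ : ℝ} (hφ : 0 < φ) : 0 < ncS n k φ := by
  refine sum_pos' (fun j _ => by positivity) ⟨k, mem_range.mpr (by omega), ?_⟩
  have := Nat.choose_pos hk
  rw [stirling2_self]
  positivity

noncomputable def binomSum (n : ℕ) (φ : ℝ) (f : ℕ → ℝ) : ℝ :=
  ∑ j ∈ range (n + 1), (n.choose j : ℝ) * φ ^ (n - j) * f j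

lemma sub_mul_choose_succ {m j : ℕ} (hj : j ≤ m + 1) :
    ((m + 1 : ℕ) - j : ℝ) * (m + 1).choose j = (m + 1 : ℕ) * m.choose j := by
  rw [← Nat.cast_sub hj, ← Nat.cast_mul, ← Nat.cast_mul, mul_comm, ← Nat.choose_mul_succ_eq,
    mul_comm]

lemma sum_sub_mul_binomSum (n : ℕ) (φ : ℝ) (f : ℕ → ℝ) :
    ∑ j ∈ range (n + 1), ((n : ℝ) - j) * ((n.choose j : ℝ) * φ ^ (n - j) * f j) =
      n * φ * binomSum (n - 1) φ f := by
  rcases n with _ | m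
  · simp
  rw [sum_range_succ, sub_self, zero_mul, add_zero, binomSum, Nat.add_sub_cancel, mul_sum]
  refine sum_congr rfl fun j hj => ?_
  have hjm : j ≤ m := Nat.lt_succ_iff.mp (mem_range.mp hj)
  rw [(by omega : m + 1 - j = m - j + 1), pow_succ, ← mul_assoc, ← mul_assoc,
    sub_mul_choose_succ (by omega)]
  ring

lemma sum_sub_mul_sub_one_mul_binomSum (n : ℕ) (φ : ℝ) (f : ℕ → ℝ) :
    ∑ j ∈ range (n + 1),
        ((n : ℝ) - j) * ((n : ℝ) - j - 1) * ((n.choose j : ℝ) * φ ^ (n - j) * f j) =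
      n * (n - 1) * φ ^ 2 * binomSum (n - 2) φ f := by
  rcases n with _ | m
  · simp
  calc _ = ∑ j ∈ range (m + 1 + 1), ((m + 1 : ℕ) - j : ℝ) *
          (((m + 1).choose j : ℝ) * φ ^ (m + 1 - j) * (((m + 1 : ℕ) - 1 - j : ℝ) * f j)) :=
        sum_congr rfl fun j _ => by ring
    _ = (m + 1 : ℕ) * φ *
          ∑ j ∈ range (m + 1), ((m : ℝ) - j) * ((m.choose j : ℝ) * φ ^ (m - j) * f j) := by
        rw [sum_sub_mul_binomSum, binomSum, Nat.add_sub_cancel]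
        congr 1
        exact sum_congr rfl fun j _ => by push_cast; ring
    _ = _ := by
        rw [sum_sub_mul_binomSum, (by omega : m + 1 - 2 = m - 1)]
        push_cast
        ring

lemma binomSum_stirling2 (n k : ℕ) (φ : ℝ) :
    binomSum n φ (fun j => (stirling2 j k : ℝ)) = ncS n k φ :=
  rfl

lemma sum_mul_spillage {n k : ℕ} (hk : k ≤ n) (φ : ℝ) (g : ℝ → ℝ) :
    ∑ r ∈ range (n - k + 1), g r * spillage r n k φ =
      (∑ j ∈ range (n + 1), g ((j : ℝ) - k) * ((n.choose j : ℝ) * φ ^ (n - j) * stirling2 j k)) /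
        ncS n k φ := by
  rw [← sum_range_add_sum_Ico _ (by omega : k ≤ n + 1), sum_Ico_eq_sum_range,
    sum_eq_zero (s := range k) fun j hj => by simp [stirling2_eq_zero_of_lt (mem_range.mp hj)],
    zero_add,
    (by omega : n + 1 - k = n - k + 1), sum_div]
  refine sum_congr rfl fun r _ => ?_
  rw [spillage, Nat.sub_sub, Nat.cast_add, add_sub_cancel_left]
  ring

theorem stmt8 (n k : ℕ) (hk : k ≤ n) (φ : ℝ) (hφ : 0 < φ) :
    (∑ r ∈ Finset.range (n - k + 1), (r : ℝ) ^ 2 * spillage r n k φ) -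
        (∑ r ∈ Finset.range (n - k + 1), (r : ℝ) * spillage r n k φ) ^ 2 =
      (n : ℝ) * (φ ^ 1 * ncS (n - 1) k φ / ncS n k φ) -
        (n : ℝ) ^ 2 * (φ ^ 1 * ncS (n - 1) k φ / ncS n k φ) ^ 2 +
        (n : ℝ) * ((n : ℝ) - 1) * (φ ^ 2 * ncS (n - 2) k φ / ncS n k φ) := by
  have hmass : ∑ j ∈ range (n + 1), (n.choose j : ℝ) * φ ^ (n - j) * stirling2 j k = ncS n k φ := rfl
  have hfact1 := sum_sub_mul_binomSum n φ (fun j => (stirling2 j k : ℝ))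
  have hfact2 := sum_sub_mul_sub_one_mul_binomSum n φ (fun j => (stirling2 j k : ℝ))
  rw [binomSum_stirling2] at hfact1 hfact2
  have hmean : ∑ r ∈ range (n - k + 1), (r : ℝ) * spillage r n k φ =
      ((n - k) * ncS n k φ - n * φ * ncS (n - 1) k φ) / ncS n k φ := by
    refine (sum_mul_spillage hk φ fun x => x).trans ?_
    rw [← hmass, ← hfact1, mul_sum, ← sum_sub_distrib]
    exact congrArg (· / _) (sum_congr rfl fun j _ => by ring)
  have hsecond : ∑ r ∈ range (n - k + 1), (r : ℝ) ^ 2 * spillage r n k φ =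
      ((n - k) ^ 2 * ncS n k φ - (2 * (n - k) - 1) * (n * φ * ncS (n - 1) k φ) +
        n * (n - 1) * φ ^ 2 * ncS (n - 2) k φ) / ncS n k φ := by
    refine (sum_mul_spillage hk φ fun x => x ^ 2).trans ?_
    rw [← hmass, ← hfact1, ← hfact2, mul_sum, mul_sum, ← sum_sub_distrib, ← sum_add_distrib]
    exact congrArg (· / _) (sum_congr rfl fun j _ => by ring)
  rw [hmean, hsecond]
  field_simp [(ncS_pos hk hφ).ne']
  ring
end

section
/- For fixed k ≥ 1 and φ > 0, the ratio S(n, k-1, φ)/S(n, k, φ) tends to 0 as n → ∞. -/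
/-! The recursion, started from `S(k, k, φ) = 1`, gives `S(n, k, φ) ≥ (k + φ)^(n-k)`, and
induction on `n` in the same recursion gives `S(n, k-1, φ) ≤ n^(k-1) (k-1+φ)^n`. The ratio is
therefore at most a polynomial in `n` times `((k-1+φ)/(k+φ))^n`, which tends to `0`. -/

open Finset Filter Real

lemma stirling2_eq_zero_of_lt_s11 {n k : ℕ} (h : n < k) : stirling2 n k = 0 := by
  induction n generalizing k with
  | zero => obtain ⟨k, rfl⟩ := Nat.exists_eq_succ_of_ne_zero h.ne'; rfl
  | succ n ih =>
    obtain ⟨k, rfl⟩ := Nat.exists_eq_succ_of_ne_zero (n.succ_pos.trans h).ne'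
    simp [stirling2, ih (by omega : n < k + 1), ih (by omega : n < k)]

lemma stirling2_self_s11 (n : ℕ) : stirling2 n n = 1 := by
  induction n with
  | zero => rfl
  | succ n ih => simp [stirling2, ih, stirling2_eq_zero_of_lt_s11 (Nat.lt_succ_self n)]

section ncS

variable (φ : ℝ)

lemma ncS_zero_right (n : ℕ) : ncS n 0 φ = φ ^ n := by
  rw [ncS, sum_range_succ']
  simp [stirling2]

lemma ncS_self (k : ℕ) : ncS k k φ = 1 := by
  rw [ncS, sum_range_succ, sum_eq_zero fun j hj => by
    rw [stirling2_eq_zero_of_lt_s11 (mem_range.mp hj)]; simp]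
  simp [stirling2_self_s11]

lemma ncS_succ_succ (n k : ℕ) :
    ncS (n + 1) (k + 1) φ = (k + 1 + φ) * ncS n (k + 1) φ + ncS n k φ := by
  have h := sum_choose_succ_mul (fun i j => φ ^ j * (stirling2 i (k + 1) : ℝ)) n
  simp only [← mul_assoc] at h
  rw [ncS, h, ncS, ncS, mul_sum, ← sum_add_distrib, ← sum_add_distrib]
  refine sum_congr rfl fun i hi => ?_
  rw [Nat.sub_add_comm (mem_range_succ_iff.mp hi), stirling2]
  push_cast
  ring

variable {φ}

lemma ncS_nonneg (hφ : 0 ≤ φ) (n k : ℕ) : 0 ≤ ncS n k φ :=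
  sum_nonneg fun _ _ => by positivity

lemma mul_ncS_le_ncS_succ (hφ : 0 ≤ φ) (n k : ℕ) :
    (k + φ) * ncS n k φ ≤ ncS (n + 1) k φ := by
  cases k with
  | zero => simp [ncS_zero_right, pow_succ, mul_comm]
  | succ k =>
    rw [ncS_succ_succ]
    push_cast
    linarith [ncS_nonneg hφ n k]

lemma pow_le_ncS_add (hφ : 0 ≤ φ) (k n : ℕ) : (k + φ) ^ n ≤ ncS (k + n) k φ := by
  induction n with
  | zero => simp [ncS_self]
  | succ n ih =>
    calc (k + φ) ^ (n + 1) = (k + φ) * (k + φ) ^ n := pow_succ' _ _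
      _ ≤ (k + φ) * ncS (k + n) k φ := by gcongr
      _ ≤ ncS (k + (n + 1)) k φ := mul_ncS_le_ncS_succ hφ _ _

lemma ncS_le_pow_mul_pow (hφ : 0 ≤ φ) (n k : ℕ) :
    ncS n k φ ≤ (n : ℝ) ^ k * (k + φ) ^ n := by
  induction n generalizing k with
  | zero =>
    cases k with
    | zero => simp [ncS_zero_right]
    | succ k => simp [ncS, stirling2]
  | succ n ih =>
    cases k with
    | zero => simp [ncS_zero_right]
    | succ k =>
      have hpow : (k + φ) ^ n ≤ (k + 1 + φ) ^ (n + 1) :=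
        calc (k + φ) ^ n ≤ (k + 1 + φ) ^ n := by gcongr; linarith
          _ ≤ (k + 1 + φ) ^ (n + 1) := pow_le_pow_right₀ (by linarith) n.le_succ
      have hpoly : (n : ℝ) ^ (k + 1) + (n : ℝ) ^ k ≤ ((n : ℝ) + 1) ^ (k + 1) :=
        calc (n : ℝ) ^ (k + 1) + (n : ℝ) ^ k = (n : ℝ) ^ k * (n + 1) := by ring
          _ ≤ ((n : ℝ) + 1) ^ k * (n + 1) := by gcongr; linarith
          _ = ((n : ℝ) + 1) ^ (k + 1) := (pow_succ _ _).symm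
      calc ncS (n + 1) (k + 1) φ
          = (k + 1 + φ) * ncS n (k + 1) φ + ncS n k φ := ncS_succ_succ φ n k
        _ ≤ (k + 1 + φ) * ((n : ℝ) ^ (k + 1) * (k + 1 + φ) ^ n)
            + (n : ℝ) ^ k * (k + 1 + φ) ^ (n + 1) := by
          have ih_succ := ih (k + 1)
          push_cast at ih_succ
          grw [ih_succ, ih k, hpow]
        _ = ((n : ℝ) ^ (k + 1) + (n : ℝ) ^ k) * (k + 1 + φ) ^ (n + 1) := by ring
        _ ≤ ((n : ℝ) + 1) ^ (k + 1) * (k + 1 + φ) ^ (n + 1) := by gcongr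
        _ = _ := by push_cast; ring

lemma ncS_div_ncS_succ_le (hφ : 0 ≤ φ) {n k : ℕ} (hn : k + 1 ≤ n) :
    ncS n k φ / ncS n (k + 1) φ ≤
      (k + 1 + φ) ^ (k + 1) * ((n : ℝ) ^ k * ((k + φ) / (k + 1 + φ)) ^ n) := by
  obtain ⟨j, rfl⟩ := Nat.exists_eq_add_of_le hn
  have hlower := pow_le_ncS_add hφ (k + 1) j
  push_cast at hlower
  calc ncS (k + 1 + j) k φ / ncS (k + 1 + j) (k + 1) φ
      ≤ ((k + 1 + j : ℕ) : ℝ) ^ k * (k + φ) ^ (k + 1 + j) / (k + 1 + φ) ^ j :=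
        div_le_div₀ (by positivity) (ncS_le_pow_mul_pow hφ _ k) (by positivity) hlower
    _ = _ := by
      rw [div_pow]
      field_simp
      ring

end ncS

theorem stmt11 (k : ℕ) (hk : 1 ≤ k) (φ : ℝ) (hφ : 0 < φ) :
    Filter.Tendsto (fun n : ℕ => ncS n (k - 1) φ / ncS n k φ)
      Filter.atTop (nhds 0) := by
  obtain ⟨k, rfl⟩ : ∃ k', k = k' + 1 := ⟨k - 1, by omega⟩
  simp only [Nat.add_sub_cancel]
  have hratio : (k + φ) / (k + 1 + φ) < 1 := (div_lt_one (by positivity)).mpr (by linarith)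
  have hlim := (tendsto_pow_const_mul_const_pow_of_lt_one k (by positivity) hratio).const_mul
    ((k + 1 + φ) ^ (k + 1))
  rw [mul_zero] at hlim
  refine squeeze_zero' (.of_forall fun n => div_nonneg (ncS_nonneg hφ.le n k)
    (ncS_nonneg hφ.le n (k + 1))) ?_ hlim
  filter_upwards [eventually_ge_atTop (k + 1)] with n hn using ncS_div_ncS_succ_le hφ.le hn
end
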